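/- The set ℚ ∪ S_{q,u} is a subfield of ℝ (i.e., it is closed under addition, negation, multiplication, and inverses of nonzero elements, and contains 0 and 1). -/

import Mathlib

open Filter

/-- Distance from a real number to the nearest integer. -/
noncomputable def distNearestInt (x : ℝ) : ℝ := |x - round x|

/-- The Liouville set `S_{q,u}` attached to a sequence `q` of positive integers and a
sequence `u` of positive reals. -/
def LSet (q : ℕ → ℕ) (u : ℕ → ℝ) : Set ℝ :=
  {ξ : ℝ | Irrational ξ ∧ ∃ κ₁ κ₂ : ℝ, 0 < κ₁ ∧ 0 < κ₂ ∧ ∃ b : ℕ → ℕ,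
    ∀ᶠ n in Filter.atTop, 1 ≤ b n ∧ (b n : ℝ) ≤ (q n : ℝ) ^ κ₁ ∧
      distNearestInt ((b n : ℝ) * ξ) ≤ (q n : ℝ) ^ (-(κ₂ * u n))}

/-!
If `b ξ` and `b' η` lie within `q^(-κ₂ u)` of integers, then `b b' (ξ + η)` and `b b' ξ η` lie
within `O(q^(κ - κ₂ u))` of integers while `b b'` stays polynomial in `q`; for `ξ⁻¹` the roles of
`b` and of the integer nearest to `b ξ` are exchanged. Since `u → ∞`, such polynomial losses in
`q` are absorbed by shrinking the exponent `κ₂`, so the reals admitting these approximations form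
a field; it contains `ℚ`, and its irrational elements are exactly `S_{q,u}`.
-/

open Topology Real

lemma distNearestInt_nonneg (x : ℝ) : 0 ≤ distNearestInt x := abs_nonneg _

lemma distNearestInt_le_abs_sub (x : ℝ) (m : ℤ) : distNearestInt x ≤ |x - m| := round_le x m

lemma distNearestInt_intCast (m : ℤ) : distNearestInt m = 0 := by
  simp [distNearestInt]

lemma distNearestInt_neg_le (x : ℝ) : distNearestInt (-x) ≤ distNearestInt x :=
  calc distNearestInt (-x) ≤ |-x - ((-round x : ℤ) : ℝ)| := distNearestInt_le_abs_sub _ _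
    _ = |x - round x| := by push_cast; rw [← abs_neg]; ring_nf

lemma distNearestInt_neg (x : ℝ) : distNearestInt (-x) = distNearestInt x :=
  le_antisymm (distNearestInt_neg_le x) (by simpa using distNearestInt_neg_le (-x))

lemma distNearestInt_abs_mul (a x : ℝ) : distNearestInt (|a| * x) = distNearestInt (a * x) := by
  rcases abs_choice a with h | h <;> simp [h, distNearestInt_neg]

lemma distNearestInt_add_le (x y : ℝ) :
    distNearestInt (x + y) ≤ distNearestInt x + distNearestInt y :=
  calc distNearestInt (x + y) ≤ |x + y - ((round x + round y : ℤ) : ℝ)| :=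
        distNearestInt_le_abs_sub _ _
    _ = |(x - round x) + (y - round y)| := by push_cast; ring_nf
    _ ≤ distNearestInt x + distNearestInt y := abs_add_le _ _

lemma distNearestInt_natCast_mul_le (n : ℕ) (x : ℝ) :
    distNearestInt (n * x) ≤ n * distNearestInt x :=
  calc distNearestInt (n * x) ≤ |n * x - ((n * round x : ℤ) : ℝ)| := distNearestInt_le_abs_sub _ _
    _ = n * distNearestInt x := by
      push_cast
      rw [← mul_sub, abs_mul, Nat.abs_cast]
      rfl

lemma distNearestInt_mul_le (x y : ℝ) :
    distNearestInt (x * y) ≤ |x| * distNearestInt y + |(round y : ℝ)| * distNearestInt x :=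
  calc distNearestInt (x * y) ≤ |x * y - ((round x * round y : ℤ) : ℝ)| :=
        distNearestInt_le_abs_sub _ _
    _ = |x * (y - round y) + round y * (x - round x)| := by push_cast; ring_nf
    _ ≤ |x| * distNearestInt y + |(round y : ℝ)| * distNearestInt x :=
      (abs_add_le _ _).trans_eq (by rw [abs_mul, abs_mul]; rfl)

lemma abs_round_natCast_mul_le {b : ℕ} {B : ℝ} (hb : 1 ≤ b) (hbB : (b : ℝ) ≤ B) (ξ : ℝ) :
    |(round (b * ξ) : ℝ)| ≤ (|ξ| + 1) * B := by
  have hb' : (1 : ℝ) ≤ b := by exact_mod_cast hb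
  have h := abs_sub_abs_le_abs_sub (round (b * ξ) : ℝ) (b * ξ)
  rw [abs_sub_comm, abs_mul (b : ℝ), Nat.abs_cast] at h
  nlinarith [abs_sub_round ((b : ℝ) * ξ), abs_nonneg ξ]

lemma rpow_mul_rpow_le_rpow {Q a b c : ℝ} (hQ : 1 ≤ Q) (h : a + b ≤ c) :
    Q ^ a * Q ^ b ≤ Q ^ c := by
  rw [← rpow_add (by linarith)]
  exact rpow_le_rpow_of_exponent_le hQ h

variable {q : ℕ → ℕ} {u : ℕ → ℝ} {ξ η : ℝ}

lemma tendsto_rpow_neg_mul (hq : Tendsto q atTop atTop) (hu : Tendsto u atTop atTop) {κ : ℝ}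
    (hκ : 0 < κ) : Tendsto (fun n ↦ (q n : ℝ) ^ (-(κ * u n))) atTop (𝓝 0) := by
  have hqR : Tendsto (fun n ↦ (q n : ℝ)) atTop atTop := tendsto_natCast_atTop_atTop.comp hq
  refine tendsto_of_tendsto_of_tendsto_of_le_of_le' tendsto_const_nhds
    (tendsto_inv_atTop_zero.comp hqR) (Eventually.of_forall fun n ↦ by positivity) ?_
  filter_upwards [hqR.eventually_ge_atTop 1, (hu.const_mul_atTop hκ).eventually_ge_atTop 1]
    with n hq1 hu1
  rw [Function.comp_apply, ← rpow_neg_one]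
  exact rpow_le_rpow_of_exponent_le hq1 (by linarith)

/-- The approximation property defining `S_{q,u}`, without the irrationality requirement. -/
def RapidlyApproximable (q : ℕ → ℕ) (u : ℕ → ℝ) (ξ : ℝ) : Prop :=
  ∃ κ₁ κ₂ : ℝ, 0 < κ₁ ∧ 0 < κ₂ ∧ ∃ b : ℕ → ℕ,
    ∀ᶠ n in atTop, 1 ≤ b n ∧ (b n : ℝ) ≤ (q n : ℝ) ^ κ₁ ∧
      distNearestInt ((b n : ℝ) * ξ) ≤ (q n : ℝ) ^ (-(κ₂ * u n))

namespace RapidlyApproximable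

theorem of_bounds (hq : Tendsto q atTop atTop) (hu : Tendsto u atTop atTop)
    {C κ₁ κ₂ κ₃ : ℝ} (hκ₁ : 0 ≤ κ₁) (hκ₂ : 0 < κ₂) (b : ℕ → ℕ)
    (hb : ∀ᶠ n in atTop, 1 ≤ b n ∧ (b n : ℝ) ≤ C * (q n : ℝ) ^ κ₁ ∧
      distNearestInt ((b n : ℝ) * ξ) ≤ C * (q n : ℝ) ^ (κ₃ - κ₂ * u n)) :
    RapidlyApproximable q u ξ := by
  have hqR : Tendsto (fun n ↦ (q n : ℝ)) atTop atTop := tendsto_natCast_atTop_atTop.comp hq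
  refine ⟨κ₁ + 1, κ₂ / 2, by linarith, by linarith, b, ?_⟩
  filter_upwards [hb, hqR.eventually_ge_atTop (max C 1),
    (hu.const_mul_atTop (half_pos hκ₂)).eventually_ge_atTop (κ₃ + 1)]
    with n ⟨hb1, hbC, hdC⟩ hqC hu'
  have hq1 : 1 ≤ (q n : ℝ) := le_of_max_le_right hqC
  have hCq : C ≤ (q n : ℝ) ^ (1 : ℝ) := (rpow_one _).symm ▸ le_of_max_le_left hqC
  refine ⟨hb1, ?_, ?_⟩
  · calc (b n : ℝ) ≤ C * (q n : ℝ) ^ κ₁ := hbC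
      _ ≤ (q n : ℝ) ^ (1 : ℝ) * (q n : ℝ) ^ κ₁ := by gcongr
      _ ≤ (q n : ℝ) ^ (κ₁ + 1) := rpow_mul_rpow_le_rpow hq1 (by linarith)
  · calc distNearestInt ((b n : ℝ) * ξ) ≤ C * (q n : ℝ) ^ (κ₃ - κ₂ * u n) := hdC
      _ ≤ (q n : ℝ) ^ (1 : ℝ) * (q n : ℝ) ^ (κ₃ - κ₂ * u n) := by gcongr
      _ ≤ (q n : ℝ) ^ (-(κ₂ / 2 * u n)) := rpow_mul_rpow_le_rpow hq1 (by linarith)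

theorem ratCast (hq : Tendsto q atTop atTop) (hu : Tendsto u atTop atTop) (r : ℚ) :
    RapidlyApproximable q u r := by
  refine of_bounds hq hu (C := r.den) (κ₃ := 0) le_rfl one_pos (fun _ ↦ r.den)
    (Eventually.of_forall fun n ↦ ⟨r.pos, by simp, ?_⟩)
  have hnum : (r.den : ℝ) * r = r.num := by exact_mod_cast Rat.den_mul_eq_num r
  rw [hnum, distNearestInt_intCast]
  positivity

theorem neg (hξ : RapidlyApproximable q u ξ) : RapidlyApproximable q u (-ξ) := by
  obtain ⟨κ₁, κ₂, hκ₁, hκ₂, b, hb⟩ := hξ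
  refine ⟨κ₁, κ₂, hκ₁, hκ₂, b, hb.mono fun n ⟨hb1, hbq, hd⟩ ↦ ⟨hb1, hbq, ?_⟩⟩
  rwa [mul_neg, distNearestInt_neg]

theorem add (hq : Tendsto q atTop atTop) (hu : Tendsto u atTop atTop)
    (hξ : RapidlyApproximable q u ξ) (hη : RapidlyApproximable q u η) :
    RapidlyApproximable q u (ξ + η) := by
  obtain ⟨κ₁, κ₂, hκ₁, hκ₂, b, hb⟩ := hξ
  obtain ⟨κ₁', κ₂', hκ₁', hκ₂', b', hb'⟩ := hη
  refine of_bounds hq hu (C := 2) (κ₁ := κ₁ + κ₁') (κ₃ := κ₁ + κ₁') (by positivity) (lt_min hκ₂ hκ₂')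
    (fun n ↦ b n * b' n) ?_
  filter_upwards [hb, hb', hq.eventually_ge_atTop 1, hu.eventually_ge_atTop 0]
    with n ⟨hb1, hbq, hd⟩ ⟨hb1', hbq', hd'⟩ hq1 hu0
  have hQ : (1 : ℝ) ≤ q n := by exact_mod_cast hq1
  set Q : ℝ := (q n : ℝ)
  have hmin : min κ₂ κ₂' * u n ≤ κ₂ * u n := by gcongr; exact min_le_left _ _
  have hmin' : min κ₂ κ₂' * u n ≤ κ₂' * u n := by gcongr; exact min_le_right _ _
  refine ⟨Nat.one_le_iff_ne_zero.2 (by positivity), ?_, ?_⟩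
  · calc ((b n * b' n : ℕ) : ℝ) ≤ Q ^ κ₁ * Q ^ κ₁' := by push_cast; gcongr
      _ ≤ Q ^ (κ₁ + κ₁') := rpow_mul_rpow_le_rpow hQ le_rfl
      _ ≤ 2 * Q ^ (κ₁ + κ₁') := le_mul_of_one_le_left (by positivity) one_le_two
  · have e : ((b n * b' n : ℕ) : ℝ) * (ξ + η) = b' n * (b n * ξ) + b n * (b' n * η) := by
      push_cast; ring
    rw [e]
    calc distNearestInt (b' n * (b n * ξ) + b n * (b' n * η))
        ≤ b' n * distNearestInt (b n * ξ) + b n * distNearestInt (b' n * η) :=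
          (distNearestInt_add_le _ _).trans
            (add_le_add (distNearestInt_natCast_mul_le _ _) (distNearestInt_natCast_mul_le _ _))
      _ ≤ Q ^ κ₁' * Q ^ (-(κ₂ * u n)) + Q ^ κ₁ * Q ^ (-(κ₂' * u n)) := by
          gcongr <;> exact distNearestInt_nonneg _
      _ ≤ Q ^ (κ₁ + κ₁' - min κ₂ κ₂' * u n) + Q ^ (κ₁ + κ₁' - min κ₂ κ₂' * u n) :=
          add_le_add (rpow_mul_rpow_le_rpow hQ (by linarith))
            (rpow_mul_rpow_le_rpow hQ (by linarith))
      _ = 2 * Q ^ (κ₁ + κ₁' - min κ₂ κ₂' * u n) := by ring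

theorem mul (hq : Tendsto q atTop atTop) (hu : Tendsto u atTop atTop)
    (hξ : RapidlyApproximable q u ξ) (hη : RapidlyApproximable q u η) :
    RapidlyApproximable q u (ξ * η) := by
  obtain ⟨κ₁, κ₂, hκ₁, hκ₂, b, hb⟩ := hξ
  obtain ⟨κ₁', κ₂', hκ₁', hκ₂', b', hb'⟩ := hη
  refine of_bounds hq hu (C := |ξ| + |η| + 1) (κ₁ := κ₁ + κ₁') (κ₃ := κ₁ + κ₁') (by positivity)
    (lt_min hκ₂ hκ₂') (fun n ↦ b n * b' n) ?_
  filter_upwards [hb, hb', hq.eventually_ge_atTop 1, hu.eventually_ge_atTop 0]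
    with n ⟨hb1, hbq, hd⟩ ⟨hb1', hbq', hd'⟩ hq1 hu0
  have hQ : (1 : ℝ) ≤ q n := by exact_mod_cast hq1
  set Q : ℝ := (q n : ℝ)
  have hmin : min κ₂ κ₂' * u n ≤ κ₂ * u n := by gcongr; exact min_le_left _ _
  have hmin' : min κ₂ κ₂' * u n ≤ κ₂' * u n := by gcongr; exact min_le_right _ _
  have hX : |(b n : ℝ) * ξ| ≤ |ξ| * Q ^ κ₁ := by
    rw [abs_mul, Nat.abs_cast, mul_comm]
    gcongr
  have hY : |(round (b' n * η) : ℝ)| ≤ (|η| + 1) * Q ^ κ₁' := abs_round_natCast_mul_le hb1' hbq' η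
  refine ⟨Nat.one_le_iff_ne_zero.2 (by positivity), ?_, ?_⟩
  · calc ((b n * b' n : ℕ) : ℝ) ≤ Q ^ κ₁ * Q ^ κ₁' := by push_cast; gcongr
      _ ≤ Q ^ (κ₁ + κ₁') := rpow_mul_rpow_le_rpow hQ le_rfl
      _ ≤ (|ξ| + |η| + 1) * Q ^ (κ₁ + κ₁') :=
          le_mul_of_one_le_left (by positivity) (by linarith [abs_nonneg ξ, abs_nonneg η])
  · have e : ((b n * b' n : ℕ) : ℝ) * (ξ * η) = (b n * ξ) * (b' n * η) := by push_cast; ring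
    rw [e]
    calc distNearestInt ((b n * ξ) * (b' n * η))
        ≤ |(b n : ℝ) * ξ| * distNearestInt (b' n * η)
          + |(round (b' n * η) : ℝ)| * distNearestInt (b n * ξ) := distNearestInt_mul_le _ _
      _ ≤ |ξ| * Q ^ κ₁ * Q ^ (-(κ₂' * u n)) + (|η| + 1) * Q ^ κ₁' * Q ^ (-(κ₂ * u n)) := by
          gcongr <;> exact distNearestInt_nonneg _
      _ ≤ |ξ| * Q ^ (κ₁ + κ₁' - min κ₂ κ₂' * u n)
          + (|η| + 1) * Q ^ (κ₁ + κ₁' - min κ₂ κ₂' * u n) := by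
          rw [mul_assoc, mul_assoc]
          gcongr <;> exact rpow_mul_rpow_le_rpow hQ (by linarith)
      _ = (|ξ| + |η| + 1) * Q ^ (κ₁ + κ₁' - min κ₂ κ₂' * u n) := by ring

theorem inv (hq : Tendsto q atTop atTop) (hu : Tendsto u atTop atTop)
    (hξ : RapidlyApproximable q u ξ) (hξ0 : ξ ≠ 0) : RapidlyApproximable q u ξ⁻¹ := by
  obtain ⟨κ₁, κ₂, hκ₁, hκ₂, b, hb⟩ := hξ
  have habs : 0 < |ξ| := abs_pos.2 hξ0
  refine of_bounds hq hu (C := |ξ| + 1 + |ξ|⁻¹) (κ₁ := κ₁) (κ₃ := 0) hκ₁.le hκ₂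
    (fun n ↦ (round (b n * ξ)).natAbs) ?_
  filter_upwards [hb, (tendsto_order.1 (tendsto_rpow_neg_mul hq hu hκ₂)).2 |ξ| habs]
    with n ⟨hb1, hbq, hd⟩ hsmall
  set p := round ((b n : ℝ) * ξ)
  have hp : p ≠ 0 := by
    intro hp0
    have : |ξ| ≤ distNearestInt (b n * ξ) := by
      change |ξ| ≤ |(b n : ℝ) * ξ - p|
      rw [hp0, Int.cast_zero, sub_zero, abs_mul, Nat.abs_cast]
      exact le_mul_of_one_le_left (abs_nonneg _) (by exact_mod_cast hb1)
    linarith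
  have hcast : ((p.natAbs : ℕ) : ℝ) = |(p : ℝ)| := by rw [Nat.cast_natAbs, Int.cast_abs]
  refine ⟨Int.natAbs_pos.2 hp, ?_, ?_⟩
  · rw [hcast]
    calc |(p : ℝ)| ≤ (|ξ| + 1) * (q n : ℝ) ^ κ₁ := abs_round_natCast_mul_le hb1 hbq ξ
      _ ≤ (|ξ| + 1 + |ξ|⁻¹) * (q n : ℝ) ^ κ₁ :=
          mul_le_mul_of_nonneg_right (le_add_of_nonneg_right (inv_nonneg.2 habs.le)) (by positivity)
  · rw [hcast, distNearestInt_abs_mul]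
    calc distNearestInt (p * ξ⁻¹) ≤ |p * ξ⁻¹ - ((b n : ℤ) : ℝ)| := distNearestInt_le_abs_sub _ _
      _ = |ξ⁻¹ * (p - b n * ξ)| := by
          congr 1
          field_simp
          push_cast
          ring
      _ = |ξ|⁻¹ * distNearestInt (b n * ξ) := by rw [abs_mul, abs_inv, abs_sub_comm]; rfl
      _ ≤ |ξ|⁻¹ * (q n : ℝ) ^ (0 - κ₂ * u n) := by rw [zero_sub]; gcongr
      _ ≤ (|ξ| + 1 + |ξ|⁻¹) * (q n : ℝ) ^ (0 - κ₂ * u n) := by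
          gcongr
          linarith [abs_nonneg ξ]

end RapidlyApproximable

def rapidlyApproximableSubfield (hq : Tendsto q atTop atTop) (hu : Tendsto u atTop atTop) :
    Subfield ℝ where
  carrier := {ξ | RapidlyApproximable q u ξ}
  zero_mem' := by simpa using RapidlyApproximable.ratCast hq hu 0
  one_mem' := by simpa using RapidlyApproximable.ratCast hq hu 1
  add_mem' := fun hξ hη ↦ hξ.add hq hu hη
  neg_mem' := RapidlyApproximable.neg
  mul_mem' := fun hξ hη ↦ hξ.mul hq hu hη
  inv_mem' ξ hξ := by
    rcases eq_or_ne ξ 0 with rfl | hξ0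
    · simpa using RapidlyApproximable.ratCast hq hu 0
    · exact hξ.inv hq hu hξ0

theorem rapidlyApproximable_iff (hq : Tendsto q atTop atTop) (hu : Tendsto u atTop atTop) :
    RapidlyApproximable q u ξ ↔ ξ ∈ Set.range ((↑) : ℚ → ℝ) ∪ LSet q u := by
  constructor
  · intro hξ
    by_cases hirr : Irrational ξ
    · exact Or.inr ⟨hirr, hξ⟩
    · exact Or.inl (not_not.mp hirr)
  · rintro (⟨r, rfl⟩ | ⟨-, hξ⟩)
    · exact RapidlyApproximable.ratCast hq hu r
    · exact hξ

theorem rat_union_LSet_isField_general (q : ℕ → ℕ) (u : ℕ → ℝ)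
    (hq : StrictMono q) (hu : Filter.Tendsto u Filter.atTop Filter.atTop) :
    ∃ K : Subfield ℝ, (K : Set ℝ) = Set.range ((↑) : ℚ → ℝ) ∪ LSet q u :=
  ⟨rapidlyApproximableSubfield hq.tendsto_atTop hu,
    Set.ext fun _ ↦ rapidlyApproximable_iff hq.tendsto_atTop hu⟩

/-- ℚ ∪ S_{q,u} is a subfield of ℝ. -/
theorem rat_union_LSet_isField (q : ℕ → ℕ) (u : ℕ → ℝ)
    (hq : StrictMono q) (hqpos : ∀ n, 0 < q n)
    (hupos : ∀ n, 0 < u n) (hu : Filter.Tendsto u Filter.atTop Filter.atTop) :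
    ∃ K : Subfield ℝ, (K : Set ℝ) = Set.range ((↑) : ℚ → ℝ) ∪ LSet q u :=
  rat_union_LSet_isField_general q u hq hu
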